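/- Let k ≥ 2 and suppose nonnegative integers n ≥ m ≥ l ≥ 0, d ≥ 2, 1 ≤ a ≤ 9 satisfy L_n^{(k)} · L_m^{(k)} · L_l^{(k)} = a·(10^d − 1)/9, and assume n > 25. Then (a/9)·10^d ≠ f_k(α)^2 · (2α − 1)^2 · α^{n+m−2} · L_l^{(k)}, where α is the dominant root of x^k − x^{k−1} − ⋯ − x − 1. (Equivalently, the linear form Λ_2 = α^{−(n+m−2)}·10^d·f_k(α)^{−2}(2α−1)^{−2}·(L_l^{(k)})^{−1}·(a/9) − 1 is nonzero.) -/

import Mathlib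

/-- The `k`-generalized Lucas sequence: `L 0 = 2`, `L 1 = 1`, and for `n ≥ 2`,
`L n = L (n-1) + L (n-2) + ⋯ + L (n-k)`, where terms with negative index count as `0`. -/
def lucasK (k : ℕ) : ℕ → ℕ
  | 0 => 2
  | 1 => 1
  | n + 2 => ∑ j ∈ Finset.range k, if _ : j ≤ n + 1 then lucasK k (n + 1 - j) else 0
termination_by n => n
decreasing_by omega

/-!
If the equality held, `α` would be a root of the rational polynomial
`9 L_l (X - 1)² (2X - 1)² X^N - a 10^d (2 + (k + 1)(X - 2))²` with `N = n + m - 2`, hence so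
would every conjugate of `α`. Being an algebraic integer strictly between `1` and `2`, `α` is
irrational and so has a conjugate `β ≠ α`; `β` is a root of `Ψ_k`, and `α` is the only root of
`Ψ_k` outside the open unit disk, so `‖β‖ < 1`. Taking norms at `β` gives
`10^d ≤ a 10^d ‖2 + (k + 1)(β - 2)‖² ≤ 324 L_l`, whereas the Diophantine equation and
`L_n ≥ F_n ≥ 324` give `324 L_l ≤ L_n L_m L_l < 10^d`.
-/

open Finset Polynomial

section Lucas

variable {k : ℕ}

lemma lucasK_add_two_ge (hk : 2 ≤ k) (n : ℕ) :
    lucasK k (n + 1) + lucasK k n ≤ lucasK k (n + 2) := by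
  rw [lucasK]
  refine le_trans ?_ (sum_le_sum_of_subset (range_subset_range.2 hk))
  simp [sum_range_succ]

lemma fib_le_lucasK (hk : 2 ≤ k) : ∀ n, Nat.fib n ≤ lucasK k n
  | 0 => Nat.zero_le _
  | 1 => by simp [lucasK]
  | n + 2 => by
    have := fib_le_lucasK hk n
    have := fib_le_lucasK hk (n + 1)
    have := lucasK_add_two_ge hk n
    rw [Nat.fib_add_two]
    omega

lemma lucasK_pos (hk : 2 ≤ k) : ∀ n, 0 < lucasK k n
  | 0 => by simp [lucasK]
  | n + 1 => (Nat.fib_pos.2 n.succ_pos).trans_le (fib_le_lucasK hk _)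

lemma mul_lucasK_lt_pow_ten {n m l d a : ℕ} (hk : 2 ≤ k) (hn : 25 < n) (ha : a ≤ 9)
    (heq : lucasK k n * lucasK k m * lucasK k l = a * ((10 ^ d - 1) / 9)) :
    324 * lucasK k l < 10 ^ d := by
  have hLn : 324 ≤ lucasK k n :=
    calc 324 ≤ Nat.fib 26 := by norm_num
      _ ≤ Nat.fib n := Nat.fib_mono hn
      _ ≤ lucasK k n := fib_le_lucasK hk n
  have hnm : 324 ≤ lucasK k n * lucasK k m := le_mul_of_le_of_one_le hLn (lucasK_pos hk m)
  have hrepunit : a * ((10 ^ d - 1) / 9) ≤ 10 ^ d - 1 :=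
    (Nat.mul_le_mul_right _ ha).trans (Nat.mul_div_le _ _)
  have := Nat.mul_le_mul_right (lucasK k l) hnm
  have : 0 < 10 ^ d := by positivity
  omega

end Lucas

section Roots

variable {k : ℕ}

lemma pow_mul_two_sub_eq_one {R : Type*} [CommRing R] {x : R}
    (h : x ^ k = ∑ i ∈ range k, x ^ i) : x ^ k * (2 - x) = 1 := by
  linear_combination (1 - x) * h - geom_sum_mul x k

-- So `Ψ_k` changes sign at most once on `(0, ∞)`.
lemma geom_sum_lt_pow_of_lt (hk : k ≠ 0) {s t : ℝ} (hs : 0 < s) (hst : s < t)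
    (h : ∑ i ∈ range k, s ^ i ≤ s ^ k) : ∑ i ∈ range k, t ^ i < t ^ k := by
  set r := t / s
  have hr : 1 < r := (one_lt_div hs).2 hst
  have ht : t = s * r := (mul_div_cancel₀ t hs.ne').symm
  calc ∑ i ∈ range k, t ^ i = ∑ i ∈ range k, s ^ i * r ^ i := by simp [ht, mul_pow]
    _ < ∑ i ∈ range k, s ^ i * r ^ k :=
      sum_lt_sum_of_nonempty (nonempty_range_iff.2 hk) fun i hi =>
        mul_lt_mul_of_pos_left (pow_lt_pow_right₀ hr (mem_range.1 hi)) (pow_pos hs i)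
    _ = (∑ i ∈ range k, s ^ i) * r ^ k := (sum_mul ..).symm
    _ ≤ s ^ k * r ^ k := mul_le_mul_of_nonneg_right h (by positivity)
    _ = t ^ k := by rw [ht, mul_pow]

lemma eq_one_or_eq_of_pow_mul_two_sub_le (hk : k ≠ 0) {α t : ℝ}
    (hα : α ^ k = ∑ i ∈ range k, α ^ i) (ht1 : 1 ≤ t) (htα : t ≤ α)
    (hle : t ^ k * (2 - t) ≤ 1) : t = 1 ∨ t = α := by
  rcases ht1.eq_or_lt with h | h
  · exact .inl h.symm
  refine .inr (htα.eq_or_lt.resolve_right fun htα' => ?_)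
  have hψ : ∑ i ∈ range k, t ^ i ≤ t ^ k := by
    have : (t - 1) * (t ^ k - ∑ i ∈ range k, t ^ i) = 1 - t ^ k * (2 - t) := by
      linear_combination (-1 : ℝ) * geom_sum_mul t k
    nlinarith
  exact (geom_sum_lt_pow_of_lt hk (by linarith) htα' hψ).ne hα.symm

lemma Complex.eq_norm_of_norm_add_norm_two_sub {z : ℂ} (h : ‖z‖ + ‖2 - z‖ = 2) :
    z = ‖z‖ := by
  have hz : z.re ^ 2 + z.im ^ 2 = ‖z‖ ^ 2 := by
    rw [Complex.sq_norm, Complex.normSq_apply]; ring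
  have h2z : (2 - z.re) ^ 2 + z.im ^ 2 = (2 - ‖z‖) ^ 2 := by
    rw [← eq_sub_of_add_eq' h, Complex.sq_norm, Complex.normSq_apply]
    simp only [sub_re, re_ofNat, sub_im, im_ofNat, zero_sub, mul_neg, neg_mul, neg_neg]
    ring
  have hre : z.re = ‖z‖ := by linear_combination (hz - h2z) / 4
  have him : z.im = 0 :=
    (pow_eq_zero_iff two_ne_zero).1 (by linear_combination hz - (z.re + ‖z‖) * hre)
  exact Complex.ext (by simpa using hre) (by simpa using him)

lemma norm_lt_one_of_pow_eq_geom_sum (hk : 2 ≤ k) {α : ℝ} (hα : 0 < α)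
    (hαroot : α ^ k = ∑ i ∈ range k, α ^ i) {β : ℂ} (hβroot : β ^ k = ∑ i ∈ range k, β ^ i)
    (hβα : β ≠ α) : ‖β‖ < 1 := by
  by_contra! ht1
  set t := ‖β‖
  have hk0 : k ≠ 0 := by omega
  have hβ1 : β ≠ 1 := by
    rintro rfl
    have : 1 = k := by exact_mod_cast (by simpa using hβroot : (1 : ℂ) = k)
    omega
  have hsum : t ^ k ≤ ∑ i ∈ range k, t ^ i :=
    calc t ^ k = ‖∑ i ∈ range k, β ^ i‖ := by rw [← hβroot, norm_pow]
      _ ≤ ∑ i ∈ range k, ‖β ^ i‖ := norm_sum_le _ _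
      _ = ∑ i ∈ range k, t ^ i := by simp [t]
  have htα : t ≤ α := by
    by_contra! h
    exact (geom_sum_lt_pow_of_lt hk0 hα h hαroot.ge).not_ge hsum
  have hnorm : t ^ k * ‖2 - β‖ = 1 := by
    rw [← norm_pow, ← norm_mul, pow_mul_two_sub_eq_one hβroot, norm_one]
  have ht : t = 1 ∨ t = α := eq_one_or_eq_of_pow_mul_two_sub_le hk0 hαroot ht1 htα <|
    hnorm ▸ mul_le_mul_of_nonneg_left (by simpa using norm_sub_norm_le (2 : ℂ) β) (by positivity)
  have h2β : ‖2 - β‖ = 2 - t := by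
    refine mul_left_cancel₀ (pow_pos (by linarith : (0 : ℝ) < t) k).ne' (hnorm.trans ?_)
    rcases ht with h | h <;> rw [h] <;> norm_num [pow_mul_two_sub_eq_one hαroot]
  have hβt := Complex.eq_norm_of_norm_add_norm_two_sub (z := β) (by rw [h2β]; ring)
  rcases ht with h | h
  · exact hβ1 (by rw [hβt, ← Complex.ofReal_one]; exact congrArg _ h)
  · exact hβα (by rw [hβt]; exact congrArg _ h)

end Roots

section Conjugates

variable {k : ℕ}

-- The polynomial `Ψ_k`.
noncomputable def lucasCharPoly (k : ℕ) : ℤ[X] := X ^ k - ∑ i ∈ range k, X ^ i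

lemma aeval_lucasCharPoly {A : Type*} [CommRing A] (x : A) :
    aeval x (lucasCharPoly k) = x ^ k - ∑ i ∈ range k, x ^ i := by
  simp [lucasCharPoly]

lemma lucasCharPoly_monic : (lucasCharPoly k).Monic := by
  refine monic_X_pow_sub ((degree_sum_le _ _).trans_lt ?_)
  refine (Finset.sup_lt_iff (WithBot.bot_lt_coe k)).2 fun i hi => ?_
  rw [degree_X_pow]
  exact WithBot.coe_lt_coe.2 (mem_range.1 hi)

lemma isIntegral_of_pow_eq_geom_sum {A : Type*} [CommRing A] {x : A}
    (h : x ^ k = ∑ i ∈ range k, x ^ i) : IsIntegral ℤ x :=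
  ⟨_, lucasCharPoly_monic, by rw [← aeval_def, aeval_lucasCharPoly, h, sub_self]⟩

lemma not_mem_range_ratCast_of_isIntegral {x : ℝ} (hx : IsIntegral ℤ x) (z : ℤ)
    (hz : z < x) (hx' : x < z + 1) : x ∉ (algebraMap ℚ ℝ).range := by
  rintro ⟨q, rfl⟩
  obtain ⟨w, rfl⟩ := IsIntegrallyClosed.isIntegral_iff.1
    ((isIntegral_algebraMap_iff (algebraMap ℚ ℝ).injective).1 hx)
  simp only [algebraMap_int_eq, eq_intCast, map_intCast, Int.cast_lt] at hz hx'
  have : w < z + 1 := by exact_mod_cast hx'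
  omega

lemma exists_conj_ne {x : ℝ} (hx : IsIntegral ℚ x) (hirr : x ∉ (algebraMap ℚ ℝ).range) :
    ∃ β : ℂ, β ≠ x ∧ ∀ p : ℚ[X], aeval x p = 0 → aeval β p = 0 := by
  have hcard : 1 < Fintype.card ((minpoly ℚ x).rootSet ℂ) := by
    rw [card_rootSet_eq_natDegree (minpoly.irreducible hx).separable (IsAlgClosed.splits _)]
    exact (minpoly.two_le_natDegree_iff hx).2 hirr
  have hxroot : (x : ℂ) ∈ (minpoly ℚ x).rootSet ℂ := by
    rw [mem_rootSet, ← Complex.coe_algebraMap, aeval_algebraMap_apply, minpoly.aeval, map_zero]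
    exact ⟨minpoly.ne_zero hx, rfl⟩
  obtain ⟨⟨β, hβ⟩, hne⟩ := Fintype.exists_ne_of_one_lt_card hcard ⟨x, hxroot⟩
  refine ⟨β, fun h => hne (Subtype.ext h), fun p hp => ?_⟩
  obtain ⟨q, rfl⟩ := minpoly.dvd ℚ x hp
  rw [map_mul, (mem_rootSet.1 hβ).2, zero_mul]

lemma exists_conj_norm_lt_one (hk : 2 ≤ k) {α : ℝ} (hα1 : 1 < α) (hα2 : α < 2)
    (hroot : α ^ k = ∑ i ∈ range k, α ^ i) :
    ∃ β : ℂ, ‖β‖ < 1 ∧ ∀ p : ℚ[X], aeval α p = 0 → aeval β p = 0 := by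
  have hαint : IsIntegral ℤ α := isIntegral_of_pow_eq_geom_sum hroot
  obtain ⟨β, hβα, hconj⟩ := exists_conj_ne hαint.tower_top <|
    not_mem_range_ratCast_of_isIntegral hαint 1 (by simpa using hα1) (by norm_num [hα2])
  have hβroot : β ^ k = ∑ i ∈ range k, β ^ i := by
    have := hconj ((lucasCharPoly k).map (algebraMap ℤ ℚ))
      (by rw [aeval_map_algebraMap, aeval_lucasCharPoly, hroot, sub_self])
    rwa [aeval_map_algebraMap, aeval_lucasCharPoly, sub_eq_zero] at this
  exact ⟨β, norm_lt_one_of_pow_eq_geom_sum hk (by linarith) hroot hβroot hβα, hconj⟩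

end Conjugates

section Estimates

lemma identity_at_conj {x : ℝ} {β : ℂ} (hconj : ∀ p : ℚ[X], aeval x p = 0 → aeval β p = 0)
    {k N : ℕ} {c e : ℚ}
    (h : c * ((x - 1) ^ 2 * (2 * x - 1) ^ 2 * x ^ N) = e * (2 + (k + 1) * (x - 2)) ^ 2) :
    c * ((β - 1) ^ 2 * (2 * β - 1) ^ 2 * β ^ N) = e * (2 + (k + 1) * (β - 2)) ^ 2 := by
  have := hconj
    (C c * ((X - 1) ^ 2 * (2 * X - 1) ^ 2 * X ^ N) - C e * (2 + ((k : ℚ[X]) + 1) * (X - 2)) ^ 2)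
    (by simp [map_ofNat, h])
  simpa [map_ofNat, sub_eq_zero] using this

lemma norm_sq_mul_sq_mul_pow_le {β : ℂ} (hβ : ‖β‖ ≤ 1) (N : ℕ) :
    ‖(β - 1) ^ 2 * (2 * β - 1) ^ 2 * β ^ N‖ ≤ 36 := by
  have h1 : ‖β - 1‖ ≤ 2 := (norm_sub_le _ _).trans (by rw [norm_one]; linarith)
  have h2 : ‖2 * β - 1‖ ≤ 3 :=
    (norm_sub_le _ _).trans (by rw [norm_mul, Complex.norm_ofNat, norm_one]; linarith)
  have h3 : ‖β‖ ^ N ≤ 1 := pow_le_one₀ (norm_nonneg _) hβ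
  simp only [norm_mul, norm_pow]
  calc ‖β - 1‖ ^ 2 * ‖2 * β - 1‖ ^ 2 * ‖β‖ ^ N ≤ 2 ^ 2 * 3 ^ 2 * 1 := by gcongr
    _ = 36 := by norm_num

lemma one_le_norm_two_add_mul_sub_two {k : ℕ} (hk : 2 ≤ k) {β : ℂ} (hβ : ‖β‖ ≤ 1) :
    1 ≤ ‖2 + (k + 1) * (β - 2)‖ := by
  have hk' : (2 : ℝ) ≤ k := by exact_mod_cast hk
  have hnorm : ‖(k : ℂ) + 1‖ = k + 1 := by exact_mod_cast Complex.norm_natCast (k + 1)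
  rw [← norm_neg, show -(2 + (k + 1) * (β - 2)) = 2 * (k : ℂ) - (k + 1) * β by ring]
  refine le_trans ?_ (norm_sub_norm_le _ _)
  rw [norm_mul, norm_mul, hnorm, Complex.norm_ofNat, RCLike.norm_natCast]
  nlinarith [norm_nonneg β]

lemma pow_ten_le_of_identity {k N L a d : ℕ} (hk : 2 ≤ k) (ha : 1 ≤ a) {β : ℂ} (hβ : ‖β‖ ≤ 1)
    (h : ((9 * L : ℚ) : ℂ) * ((β - 1) ^ 2 * (2 * β - 1) ^ 2 * β ^ N) =
      ((a * 10 ^ d : ℚ) : ℂ) * (2 + (k + 1) * (β - 2)) ^ 2) :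
    (10 : ℝ) ^ d ≤ 324 * L := by
  have ha' : (1 : ℝ) ≤ a := by exact_mod_cast ha
  calc (10 : ℝ) ^ d ≤ a * 10 ^ d * ‖2 + (k + 1) * (β - 2)‖ ^ 2 := by
        refine (le_mul_of_one_le_left (by positivity) ha').trans ?_
        exact le_mul_of_one_le_right (by positivity)
          (one_le_pow₀ (one_le_norm_two_add_mul_sub_two hk hβ))
    _ = ‖((a * 10 ^ d : ℚ) : ℂ) * (2 + (k + 1) * (β - 2)) ^ 2‖ := by
        push_cast; simp [norm_pow]
    _ = 9 * L * ‖(β - 1) ^ 2 * (2 * β - 1) ^ 2 * β ^ N‖ := by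
        rw [← h]; push_cast; simp
    _ ≤ 9 * L * 36 := by gcongr; exact norm_sq_mul_sq_mul_pow_le hβ N
    _ = 324 * L := by ring

end Estimates

lemma one_lt_of_two_mul_one_sub_zpow_lt {k : ℕ} (hk : 2 ≤ k) {α : ℝ}
    (h : 2 * (1 - (2 : ℝ) ^ (-(k : ℤ))) < α) : 1 < α := by
  have : (2 : ℝ) ^ (-(k : ℤ)) ≤ 1 / 4 :=
    calc (2 : ℝ) ^ (-(k : ℤ)) ≤ 2 ^ (-2 : ℤ) := zpow_le_zpow_right₀ one_le_two (by omega)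
      _ = 1 / 4 := by norm_num
  linarith

theorem Lambda2_nonzero_general
    (k n m l d a : ℕ) (hk : 2 ≤ k)
    (ha1 : 1 ≤ a) (ha9 : a ≤ 9)
    (heq : lucasK k n * lucasK k m * lucasK k l = a * ((10 ^ d - 1) / 9))
    (hn : 25 < n)
    (α : ℝ) (hroot : α ^ k = ∑ i ∈ Finset.range k, α ^ i)
    (hα₁ : 2 * (1 - (2 : ℝ) ^ (-(k : ℤ))) < α) (hα₂ : α < 2) :
    ((a : ℝ) / 9) * 10 ^ d ≠
      ((α - 1) / (2 + ((k : ℝ) + 1) * (α - 2))) ^ 2 * (2 * α - 1) ^ 2 *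
        α ^ ((n : ℤ) + m - 2) * (lucasK k l : ℝ) := by
  obtain ⟨β, hβ, hconj⟩ :=
    exists_conj_norm_lt_one hk (one_lt_of_two_mul_one_sub_zpow_lt hk hα₁) hα₂ hroot
  intro hEq
  rw [show (n : ℤ) + m - 2 = (n + m - 2 : ℕ) by omega, zpow_natCast] at hEq
  -- A vanishing denominator would make the right-hand side `0` (as `x / 0 = 0`).
  have hD : 2 + ((k : ℝ) + 1) * (α - 2) ≠ 0 := by
    intro hD
    rw [hD, div_zero, zero_pow two_ne_zero, zero_mul, zero_mul, zero_mul] at hEq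
    have ha : (0 : ℝ) < a := by exact_mod_cast ha1
    exact (mul_pos (div_pos ha (by norm_num)) (by positivity)).ne' hEq
  have hα : ((9 * lucasK k l : ℚ) : ℝ) * ((α - 1) ^ 2 * (2 * α - 1) ^ 2 * α ^ (n + m - 2)) =
      ((a * 10 ^ d : ℚ) : ℝ) * (2 + (k + 1) * (α - 2)) ^ 2 := by
    field_simp at hEq
    push_cast
    linear_combination -hEq
  have hupper := pow_ten_le_of_identity hk ha1 hβ.le (by exact_mod_cast identity_at_conj hconj hα)
  have hlower : ((324 * lucasK k l : ℕ) : ℝ) < (10 ^ d : ℕ) := by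
    exact_mod_cast mul_lucasK_lt_pow_ten hk hn ha9 heq
  push_cast at hlower
  linarith

theorem Lambda2_nonzero
    (k n m l d a : ℕ) (hk : 2 ≤ k) (hnm : m ≤ n) (hml : l ≤ m)
    (hd : 2 ≤ d) (ha1 : 1 ≤ a) (ha9 : a ≤ 9)
    (heq : lucasK k n * lucasK k m * lucasK k l = a * ((10 ^ d - 1) / 9))
    (hn : 25 < n)
    (α : ℝ) (hroot : α ^ k = ∑ i ∈ Finset.range k, α ^ i)
    (hα₁ : 2 * (1 - (2 : ℝ) ^ (-(k : ℤ))) < α) (hα₂ : α < 2) :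
    ((a : ℝ) / 9) * 10 ^ d ≠
      ((α - 1) / (2 + ((k : ℝ) + 1) * (α - 2))) ^ 2 * (2 * α - 1) ^ 2 *
        α ^ ((n : ℤ) + m - 2) * (lucasK k l : ℝ) :=
  Lambda2_nonzero_general k n m l d a hk ha1 ha9 heq hn α hroot hα₁ hα₂
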